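/- Every totally nonnegative unitriangular (k+1)×(k+1) Toeplitz matrix is a limit of totally positive unitriangular Toeplitz matrices: the closure of T_{>0} in T_{≥0} is all of T_{≥0}. -/

import Mathlib

/-- The entries of a lower unitriangular Toeplitz matrix with subdiagonal
values `h_1,…,h_k`: `h_0 = 1`, and `h_n = 0` for `n < 0` or `n > k`. -/
def toepEntry (k : ℕ) (h : Fin k → ℝ) (n : ℤ) : ℝ :=
  if hn : 0 < n ∧ n ≤ (k : ℤ) then h ⟨(n - 1).toNat, by omega⟩
  else if n = 0 then 1 else 0

/-- The `(k+1) × (k+1)` lower unitriangular Toeplitz matrix with subdiagonal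
entries `h_1,…,h_k`. -/
def toep (k : ℕ) (h : Fin k → ℝ) : Matrix (Fin (k + 1)) (Fin (k + 1)) ℝ :=
  Matrix.of fun i j => toepEntry k h ((i : ℤ) - (j : ℤ))

/-- `T_{≥0}`: all minors of the Toeplitz matrix are nonnegative. -/
def TNN (k : ℕ) : Set (Fin k → ℝ) :=
  {h | ∀ (n : ℕ) (f g : Fin n → Fin (k + 1)), StrictMono f → StrictMono g →
    0 ≤ (((toep k h).submatrix f g).det)}

/-- `T_{>0}` ⊆ `T_{≥0}`: the minors using no row and no column of the strictly
upper part (i.e. with `g i ≤ f i` for all `i`, so that the minor does not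
vanish identically on unitriangular lower-triangular matrices) are positive. -/
def TPos (k : ℕ) : Set (Fin k → ℝ) :=
  TNN k ∩
    {h | ∀ (n : ℕ) (f g : Fin n → Fin (k + 1)), StrictMono f → StrictMono g →
      (∀ i, g i ≤ f i) → 0 < (((toep k h).submatrix f g).det)}

/-!
Let `E` be the subdiagonal shift. Right multiplication by the unitriangular Toeplitz matrix
`1 + tE` replaces each column `c_j` by `c_j + t c_{j+1}`, so a minor of `C (1 + tE)` expands
multilinearly as a sum of `t^|s|` times minors of `C` whose columns `j ∈ s` are shifted by one.
Hence `1 + tE` (`t ≥ 0`) preserves total nonnegativity, and if `C` is totally nonnegative with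
positive minors whenever each column index lies between `f i - m` and `f i`, then `C (1 + tE)`
(`t > 0`) has the same property for `m + 1`: shifting exactly the columns with `g i < f i`
gives one positive term. The principal minors of `toep h` are `1`, so for `h ∈ T_{≥0}` and
`t > 0` the Toeplitz matrix `toep h (1 + tE)^k` lies in `T_{>0}`, and it tends to `toep h`
as `t → 0`.
-/

namespace Matrix

variable {M N : ℕ}

def IsTotallyNonneg (A : Matrix (Fin M) (Fin N) ℝ) : Prop :=
  ∀ (n : ℕ) (f : Fin n → Fin M) (g : Fin n → Fin N), StrictMono f → StrictMono g →
    0 ≤ (A.submatrix f g).det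

def subdiag (N : ℕ) : Matrix (Fin N) (Fin N) ℝ :=
  of fun i j => if (i : ℕ) = j + 1 then 1 else 0

def bidiag (N : ℕ) (t : ℝ) : Matrix (Fin N) (Fin N) ℝ :=
  1 + t • subdiag N

def colExt (C : Matrix (Fin M) (Fin N) ℝ) (j : ℕ) (i : Fin M) : ℝ :=
  if hj : j < N then C i ⟨j, hj⟩ else 0

def extMinor (C : Matrix (Fin M) (Fin N) ℝ) {n : ℕ} (f : Fin n → Fin M)
    (gz : Fin n → ℕ) : ℝ :=
  (of fun i j => colExt C (gz j) (f i)).det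

theorem isClosed_setOf_isTotallyNonneg :
    IsClosed {A : Matrix (Fin M) (Fin N) ℝ | A.IsTotallyNonneg} := by
  simp only [IsTotallyNonneg, Set.ofPred_forall]
  refine isClosed_iInter fun n => isClosed_iInter fun f => isClosed_iInter fun g =>
    isClosed_iInter fun _ => isClosed_iInter fun _ => isClosed_le continuous_const ?_
  exact (continuous_id.matrix_submatrix f g).matrix_det

theorem colExt_val (C : Matrix (Fin M) (Fin N) ℝ) (i : Fin M) (j : Fin N) :
    colExt C j i = C i j := by
  simp [colExt]

theorem mul_subdiag_apply (C : Matrix (Fin M) (Fin N) ℝ) (i : Fin M) (j : Fin N) :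
    (C * subdiag N) i j = colExt C (j + 1) i := by
  simp only [mul_apply, subdiag, of_apply, mul_ite, mul_one, mul_zero, colExt]
  split_ifs with hj
  · rw [Finset.sum_eq_single_of_mem ⟨j + 1, hj⟩ (Finset.mem_univ _)]
    · simp
    · intro p _ hp
      exact if_neg fun h => hp (Fin.ext h)
  · exact Finset.sum_eq_zero fun p _ => if_neg fun h : (p : ℕ) = j + 1 => hj (h ▸ p.isLt)

theorem extMinor_eq_det_submatrix (C : Matrix (Fin M) (Fin N) ℝ) {n : ℕ} (f : Fin n → Fin M)
    {gz : Fin n → ℕ} (hgz : ∀ j, gz j < N) :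
    extMinor C f gz = (C.submatrix f fun j => ⟨gz j, hgz j⟩).det := by
  simp [extMinor, colExt, hgz, submatrix]

theorem IsTotallyNonneg.extMinor_nonneg {C : Matrix (Fin M) (Fin N) ℝ} (hC : C.IsTotallyNonneg)
    {n : ℕ} {f : Fin n → Fin M} (hf : StrictMono f) {gz : Fin n → ℕ} (hgz : Monotone gz) :
    0 ≤ extMinor C f gz := by
  by_cases hinj : Function.Injective gz
  · by_cases hlt : ∀ j, gz j < N
    · rw [extMinor_eq_det_submatrix C f hlt]
      exact hC n f _ hf fun a b hab => Fin.mk_lt_mk.2 (hgz.strictMono_of_injective hinj hab)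
    · obtain ⟨j, hj⟩ := not_forall.1 hlt
      refine (det_eq_zero_of_column_eq_zero j fun i => ?_).ge
      simp [colExt, hj]
  · simp only [Function.Injective, not_forall] at hinj
    obtain ⟨a, b, hab, hne⟩ := hinj
    exact (det_zero_of_column_eq hne fun i => by simp [hab]).ge

theorem mul_bidiag_apply (C : Matrix (Fin M) (Fin N) ℝ) (t : ℝ) (i : Fin M)
    (j : Fin N) : (C * bidiag N t) i j = C i j + t * colExt C (j + 1) i := by
  simp [bidiag, Matrix.mul_add, mul_subdiag_apply]

theorem det_submatrix_mul_bidiag (C : Matrix (Fin M) (Fin N) ℝ) (t : ℝ) {n : ℕ}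
    (f : Fin n → Fin M) (g : Fin n → Fin N) :
    ((C * bidiag N t).submatrix f g).det =
      ∑ s : Finset (Fin n),
        t ^ s.card * extMinor C f fun j => g j + if j ∈ s then 1 else 0 := by
  classical
  set u : Fin n → Fin n → ℝ := fun j i => t * colExt C (g j + 1) (f i)
  set v : Fin n → Fin n → ℝ := fun j i => colExt C (g j) (f i)
  have hT : ((C * bidiag N t).submatrix f g)ᵀ = of (u + v) := by
    ext j i
    simp only [transpose_apply, submatrix_apply, mul_bidiag_apply, of_apply,
      Pi.add_apply, u, v, colExt_val]
    ring
  rw [← det_transpose, hT]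
  refine ((detRowAlternating : (Fin n → ℝ) [⋀^Fin n]→ₗ[ℝ] ℝ).map_add_univ u v).trans
    (Finset.sum_congr rfl fun s _ => ?_)
  have hpw : s.piecewise u v = fun j =>
      (if j ∈ s then t else 1) • fun i => colExt C (g j + if j ∈ s then 1 else 0) (f i) := by
    ext j i
    by_cases hj : j ∈ s <;> simp [Finset.piecewise, hj, u, v]
  rw [hpw, AlternatingMap.map_smul_univ, Finset.prod_ite_mem, Finset.univ_inter,
    Finset.prod_const, smul_eq_mul, extMinor, ← det_transpose]
  rfl

theorem monotone_add_indicator {n : ℕ} {g : Fin n → Fin N} (hg : StrictMono g)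
    (s : Finset (Fin n)) : Monotone fun j => (g j : ℕ) + if j ∈ s then 1 else 0 := by
  intro a b hab
  rcases hab.lt_or_eq with hlt | rfl
  · have := Fin.lt_def.1 (hg hlt)
    dsimp only
    split_ifs <;> omega
  · exact le_rfl

theorem IsTotallyNonneg.mul_bidiag {C : Matrix (Fin M) (Fin N) ℝ} (hC : C.IsTotallyNonneg)
    {t : ℝ} (ht : 0 ≤ t) : (C * bidiag N t).IsTotallyNonneg := by
  intro n f g hf hg
  rw [det_submatrix_mul_bidiag]
  exact Finset.sum_nonneg fun s _ =>
    mul_nonneg (pow_nonneg ht _) (hC.extMinor_nonneg hf (monotone_add_indicator hg s))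

def BandMinorsPos (C : Matrix (Fin N) (Fin N) ℝ) (m : ℕ) : Prop :=
  ∀ (n : ℕ) (f g : Fin n → Fin N), StrictMono f → StrictMono g → (∀ i, g i ≤ f i) →
    (∀ i, (f i : ℕ) ≤ g i + m) → 0 < (C.submatrix f g).det

theorem BandMinorsPos.mul_bidiag {C : Matrix (Fin N) (Fin N) ℝ} {m : ℕ}
    (hpos : C.BandMinorsPos m) (hC : C.IsTotallyNonneg) {t : ℝ} (ht : 0 < t) :
    (C * bidiag N t).BandMinorsPos (m + 1) := by
  classical
  intro n f g hf hg hgf hfg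
  set shifted := Finset.univ.filter fun j => g j < f j
  set gz : Fin n → ℕ := fun j => (g j : ℕ) + if j ∈ shifted then 1 else 0
  have hgz : ∀ j, gz j = if (g j : ℕ) < f j then (g j : ℕ) + 1 else g j := fun j => by
    simp only [gz, shifted, Finset.mem_filter, Finset.mem_univ, true_and, Fin.lt_def]
    split_ifs <;> rfl
  have hgz_le : ∀ j, gz j ≤ f j := fun j => by
    have := Fin.le_def.1 (hgf j)
    rw [hgz]; split_ifs <;> omega
  have hgz_lt : ∀ j, gz j < N := fun j => (hgz_le j).trans_lt (f j).isLt
  have hgz_mono : StrictMono gz := fun a b hab => by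
    have hfab := Fin.lt_def.1 (hf hab)
    have hgab := Fin.lt_def.1 (hg hab)
    have hgfb := Fin.le_def.1 (hgf b)
    have := hgz_le a
    have := hgz a
    rw [hgz b]; split_ifs at * <;> omega
  rw [det_submatrix_mul_bidiag]
  refine Finset.sum_pos' (fun s _ => mul_nonneg (pow_nonneg ht.le _)
    (hC.extMinor_nonneg hf (monotone_add_indicator hg s))) ⟨shifted, Finset.mem_univ _, ?_⟩
  refine mul_pos (pow_pos ht _) ?_
  rw [extMinor_eq_det_submatrix C f hgz_lt]
  refine hpos n f _ hf (fun a b hab => Fin.mk_lt_mk.2 (hgz_mono hab))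
    (fun j => Fin.le_def.2 (hgz_le j)) fun j => ?_
  have := hfg j
  have := Fin.le_def.1 (hgf j)
  show (f j : ℕ) ≤ gz j + m
  rw [hgz]; split_ifs <;> omega

theorem BandMinorsPos.mul_bidiag_pow {C : Matrix (Fin N) (Fin N) ℝ} (hpos : C.BandMinorsPos 0)
    (hC : C.IsTotallyNonneg) {t : ℝ} (ht : 0 < t) (m : ℕ) :
    (C * bidiag N t ^ m).BandMinorsPos m ∧ (C * bidiag N t ^ m).IsTotallyNonneg := by
  induction m with
  | zero => simpa using ⟨hpos, hC⟩
  | succ m ih =>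
    rw [pow_succ, ← mul_assoc]
    exact ⟨ih.1.mul_bidiag ih.2 ht, ih.2.mul_bidiag ht.le⟩

end Matrix

open Matrix Filter Topology

section Toeplitz

variable {k : ℕ}

theorem toepEntry_of_neg (h : Fin k → ℝ) {n : ℤ} (hn : n < 0) : toepEntry k h n = 0 := by
  simp [toepEntry, hn.not_gt, hn.ne]

theorem toepEntry_zero (h : Fin k → ℝ) : toepEntry k h 0 = 1 := by
  simp [toepEntry]

theorem toepEntry_of_pos (h : Fin k → ℝ) {n : ℤ} (h0 : 0 < n) (hk : n ≤ k) :
    toepEntry k h n = h ⟨(n - 1).toNat, by omega⟩ := by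
  simp [toepEntry, h0, hk]

theorem continuous_toepEntry (n : ℤ) : Continuous fun h : Fin k → ℝ => toepEntry k h n := by
  unfold toepEntry
  split_ifs
  exacts [continuous_apply _, continuous_const, continuous_const]

theorem continuous_toep : Continuous (toep k) :=
  continuous_pi fun _ => continuous_pi fun _ => continuous_toepEntry _

theorem isClosed_TNN : IsClosed (TNN k) :=
  isClosed_setOf_isTotallyNonneg.preimage continuous_toep

theorem det_toep_submatrix_self (h : Fin k → ℝ) {n : ℕ} {f : Fin n → Fin (k + 1)}
    (hf : StrictMono f) : ((toep k h).submatrix f f).det = 1 := by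
  have hlower : ((toep k h).submatrix f f).IsLowerTriangular := fun i j hij =>
    toepEntry_of_neg h (by have := Fin.lt_def.1 (hf (OrderDual.toDual_lt_toDual.1 hij)); omega)
  rw [det_of_isLowerTriangular _ hlower]
  exact Finset.prod_eq_one fun i _ => by simpa [toep] using toepEntry_zero h

theorem bandMinorsPos_toep (h : Fin k → ℝ) : (toep k h).BandMinorsPos 0 := by
  intro n f g hf _ hgf hfg
  obtain rfl : g = f := funext fun i => Fin.ext (le_antisymm (hgf i) (hfg i))
  simp [det_toep_submatrix_self h hf]

/-- Writing `h a = h_{a+1}` as in `toepEntry`, this is `h'_a = h_a + t h_{a-1}`. -/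
def shiftConv (t : ℝ) (h : Fin k → ℝ) : Fin k → ℝ :=
  fun a => h a + t * toepEntry k h a

theorem toepEntry_shiftConv (t : ℝ) (h : Fin k → ℝ) {n : ℤ} (hn : n ≤ k) :
    toepEntry k (shiftConv t h) n = toepEntry k h n + t * toepEntry k h (n - 1) := by
  rcases lt_trichotomy n 0 with hneg | rfl | hpos
  · simp [toepEntry_of_neg _ hneg, toepEntry_of_neg _ (show n - 1 < 0 by omega)]
  · simp [toepEntry_zero, toepEntry_of_neg h (show (-1 : ℤ) < 0 by norm_num)]
  · rw [toepEntry_of_pos _ hpos hn, toepEntry_of_pos _ hpos hn, shiftConv]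
    congr 3
    show ((n - 1).toNat : ℤ) = n - 1
    omega

theorem toep_shiftConv (t : ℝ) (h : Fin k → ℝ) :
    toep k (shiftConv t h) = toep k h * bidiag (k + 1) t := by
  ext i j
  rw [mul_bidiag_apply, colExt]
  change toepEntry k (shiftConv t h) (i - j) = toepEntry k h (i - j) + t * _
  rw [toepEntry_shiftConv t h (by omega)]
  congr 2
  split_ifs with hj
  · change _ = toepEntry k h (i - ((j + 1 : ℕ) : ℤ))
    push_cast
    congr 1
    ring
  · exact toepEntry_of_neg h (by omega)

theorem toep_iterate_shiftConv (t : ℝ) (h : Fin k → ℝ) (m : ℕ) :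
    toep k ((shiftConv t)^[m] h) = toep k h * bidiag (k + 1) t ^ m := by
  induction m with
  | zero => simp
  | succ m ih => rw [Function.iterate_succ_apply', toep_shiftConv, ih, pow_succ, mul_assoc]

theorem continuous_iterate_shiftConv (h : Fin k → ℝ) (m : ℕ) :
    Continuous fun t => (shiftConv t)^[m] h := by
  induction m with
  | zero => exact continuous_const
  | succ m ih =>
    simp only [Function.iterate_succ_apply']
    exact continuous_pi fun a => ((continuous_apply a).comp ih).add
      (continuous_id.mul ((continuous_toepEntry _).comp ih))

theorem iterate_shiftConv_zero (h : Fin k → ℝ) (m : ℕ) : (shiftConv 0)^[m] h = h := by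
  have : shiftConv (k := k) 0 = id := funext fun h => funext fun a => by simp [shiftConv]
  rw [this, Function.iterate_id, id]

theorem iterate_shiftConv_mem_TPos {h : Fin k → ℝ} (hh : h ∈ TNN k) {t : ℝ} (ht : 0 < t) :
    (shiftConv t)^[k] h ∈ TPos k := by
  obtain ⟨hpos, hnonneg⟩ := (bandMinorsPos_toep h).mul_bidiag_pow hh ht k
  rw [← toep_iterate_shiftConv] at hpos hnonneg
  exact ⟨hnonneg, fun n f g hf hg hgf => hpos n f g hf hg hgf fun i => by omega⟩

end Toeplitz

/-- every totally nonnegative unitriangular Toeplitz matrix is a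
limit of totally positive ones: the closure of `T_{>0}` is `T_{≥0}`. -/
theorem closure_TPos_eq_TNN (k : ℕ) : closure (TPos k) = TNN k := by
  refine subset_antisymm (isClosed_TNN.closure_subset_iff.2 Set.inter_subset_left) fun h hh => ?_
  have hlim : Tendsto (fun t => (shiftConv t)^[k] h) (𝓝[>] 0) (𝓝 h) := by
    simpa [iterate_shiftConv_zero] using
      ((continuous_iterate_shiftConv h k).tendsto 0).mono_left nhdsWithin_le_nhds
  exact mem_closure_of_tendsto hlim
    (eventually_nhdsWithin_of_forall fun _ ht => iterate_shiftConv_mem_TPos hh ht)
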